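/- The sample variance σ̂² = (1/(n−1)) Σ_{i=1}^n (p̂_i − p̄)², where p̄ = (1/n)Σ_i p̂_i, satisfies E[σ̂²] = σ² + (μ − μ² − σ²)/k; i.e., it is a biased estimator of σ² with bias equal to the expected within-prompt variance (μ(1−μ) − σ²)/k. -/

import Mathlib

open MeasureTheory ProbabilityTheory Finset

/-!
Expanding the square, `(n - 1) σ̂² = ∑ᵢ p̂ᵢ² - n⁻¹ ∑ᵢ ∑ᵢ' p̂ᵢ p̂ᵢ'`, so `E[σ̂²]` only involves the
second moments `E[p̂ᵢ p̂ᵢ']`; when these equal `a` on the diagonal and `b` off it, `E[σ̂²] = a - b`.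
The same count applied to `p̂ᵢ = k⁻¹ ∑ⱼ Yᵢⱼ` gives `b = μ²` and
`a = (μ + (k - 1)(σ² + μ²)) / k`: since `Yᵢⱼ² = Yᵢⱼ`, a draw has second moment `μ`, while two
distinct draws have conditional mean `pᵢ pᵢ'`, whose expectation is `σ² + μ²` if `i = i'` and `μ²`
otherwise.
-/

section SampleStatistics

variable {ι : Type*} [Fintype ι]

noncomputable def sampleMean (x : ι → ℝ) : ℝ := (Fintype.card ι : ℝ)⁻¹ * ∑ i, x i

noncomputable def sampleVariance (x : ι → ℝ) : ℝ :=
  ((Fintype.card ι : ℝ) - 1)⁻¹ * ∑ i, (x i - sampleMean x) ^ 2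

lemma sampleMean_mul_sampleMean (x y : ι → ℝ) :
    sampleMean x * sampleMean y = (Fintype.card ι : ℝ)⁻¹ ^ 2 * ∑ i, ∑ j, x i * y j := by
  rw [sampleMean, sampleMean, ← Fintype.sum_mul_sum]
  ring

lemma sampleVariance_eq (x : ι → ℝ) :
    sampleVariance x = ((Fintype.card ι : ℝ) - 1)⁻¹ *
      (∑ i, x i * x i - (Fintype.card ι : ℝ)⁻¹ * ∑ i, ∑ j, x i * x j) := by
  by_cases hι : Fintype.card ι = 0
  · simp [sampleVariance, Fintype.card_eq_zero_iff.mp hι]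
  have hn : (Fintype.card ι : ℝ) ≠ 0 := by exact_mod_cast hι
  have hsq : ∀ i, (x i - sampleMean x) ^ 2
      = x i * x i - 2 * sampleMean x * x i + sampleMean x ^ 2 := fun i => by ring
  rw [sampleVariance, Finset.sum_congr rfl fun i _ => hsq i, Finset.sum_add_distrib,
    Finset.sum_sub_distrib, ← Finset.mul_sum, Finset.sum_const, card_univ, nsmul_eq_mul,
    ← Fintype.sum_mul_sum, sampleMean]
  field_simp
  ring

lemma sum_ite_eq_add_card_sub_one_mul [DecidableEq ι] (i : ι) (a b : ℝ) :
    ∑ j, (if i = j then a else b) = a + ((Fintype.card ι : ℝ) - 1) * b := by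
  have h : ∀ j, (if i = j then a else b) = b + if i = j then a - b else 0 := fun j => by
    split_ifs <;> ring
  rw [Finset.sum_congr rfl fun j _ => h j, Finset.sum_add_distrib, Finset.sum_ite_eq,
    if_pos (mem_univ i), Finset.sum_const, card_univ, nsmul_eq_mul]
  ring

section Moments

variable {Ω : Type*} [MeasurableSpace Ω] {P : Measure Ω} {X W : ι → Ω → ℝ} {a b : ℝ}

lemma integral_sum_sum_mul_of_moments [DecidableEq ι]
    (hint : ∀ i j, Integrable (fun ω => X i ω * W j ω) P)
    (hmom : ∀ i j, ∫ ω, X i ω * W j ω ∂P = if i = j then a else b) :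
    ∫ ω, ∑ i, ∑ j, X i ω * W j ω ∂P
      = Fintype.card ι * (a + ((Fintype.card ι : ℝ) - 1) * b) := by
  rw [integral_finsetSum _ fun i _ => integrable_finsetSum _ fun j _ => hint i j]
  simp_rw [integral_finsetSum _ fun j _ => hint _ j, hmom, sum_ite_eq_add_card_sub_one_mul,
    Finset.sum_const, card_univ, nsmul_eq_mul]

lemma integrable_sampleMean_mul_sampleMean
    (hint : ∀ i j, Integrable (fun ω => X i ω * W j ω) P) :
    Integrable (fun ω => sampleMean (X · ω) * sampleMean (W · ω)) P := by
  simp_rw [sampleMean_mul_sampleMean]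
  exact (integrable_finsetSum _ fun i _ => integrable_finsetSum _ fun j _ => hint i j).const_mul _

lemma integral_sampleMean_mul_sampleMean [DecidableEq ι] [Nonempty ι]
    (hint : ∀ i j, Integrable (fun ω => X i ω * W j ω) P)
    (hmom : ∀ i j, ∫ ω, X i ω * W j ω ∂P = if i = j then a else b) :
    ∫ ω, sampleMean (X · ω) * sampleMean (W · ω) ∂P
      = (a + ((Fintype.card ι : ℝ) - 1) * b) / Fintype.card ι := by
  simp_rw [sampleMean_mul_sampleMean]
  rw [integral_const_mul, integral_sum_sum_mul_of_moments hint hmom]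
  field_simp

lemma integral_sampleVariance_of_moments [DecidableEq ι] (hcard : 1 < Fintype.card ι)
    (hint : ∀ i j, Integrable (fun ω => X i ω * X j ω) P)
    (hmom : ∀ i j, ∫ ω, X i ω * X j ω ∂P = if i = j then a else b) :
    ∫ ω, sampleVariance (X · ω) ∂P = a - b := by
  have hn1 : (Fintype.card ι : ℝ) - 1 ≠ 0 := sub_ne_zero.mpr (by exact_mod_cast hcard.ne')
  have hdiag : ∫ ω, ∑ i, X i ω * X i ω ∂P = Fintype.card ι * a := by
    rw [integral_finsetSum _ fun i _ => hint i i]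
    simp [hmom]
  simp_rw [sampleVariance_eq]
  rw [integral_const_mul, integral_sub (integrable_finsetSum _ fun i _ => hint i i)
    ((integrable_finsetSum _ fun i _ => integrable_finsetSum _ fun j _ => hint i j).const_mul _),
    integral_const_mul, hdiag, integral_sum_sum_mul_of_moments hint hmom]
  field_simp
  ring

lemma integral_sampleMean_mul_sampleMean_of_const [Nonempty ι]
    (hint : ∀ i j, Integrable (fun ω => X i ω * W j ω) P)
    (hmom : ∀ i j, ∫ ω, X i ω * W j ω ∂P = a) :
    ∫ ω, sampleMean (X · ω) * sampleMean (W · ω) ∂P = a := by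
  classical
  rw [integral_sampleMean_mul_sampleMean (a := a) (b := a) hint (by simp [hmom])]
  field_simp
  ring

end Moments

end SampleStatistics

section SecondMoments

variable {κ Ω : Type*} {mΩ : MeasurableSpace Ω} {P : Measure Ω}

lemma integral_mul_of_iIndepFun [IsProbabilityMeasure P] [DecidableEq κ] {p : κ → Ω → ℝ}
    {μ σ2 : ℝ} (hL2 : ∀ i, MemLp (p i) 2 P) (hindep : iIndepFun p P)
    (hmean : ∀ i, ∫ ω, p i ω ∂P = μ) (hvar : ∀ i, variance (p i) P = σ2) (i i' : κ) :
    ∫ ω, p i ω * p i' ω ∂P = if i = i' then σ2 + μ ^ 2 else μ ^ 2 := by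
  have hcov := covariance_eq_sub (hL2 i) (hL2 i')
  simp only [Pi.mul_apply, hmean] at hcov
  split_ifs with h
  · subst h
    rw [covariance_self (hL2 i).aemeasurable, hvar] at hcov
    linarith
  · rw [(hindep.indepFun h).covariance_eq_zero (hL2 i) (hL2 i')] at hcov
    linarith

lemma integral_mul_of_condExp [IsFiniteMeasure P] [DecidableEq κ] {m : MeasurableSpace Ω}
    (hm : m ≤ mΩ) {Y q : κ → Ω → ℝ} (hY01 : ∀ a ω, Y a ω = 0 ∨ Y a ω = 1)
    (hcond : ∀ a, P[Y a | m] =ᵐ[P] q a)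
    (hcondprod : ∀ a b, a ≠ b →
      P[fun ω => Y a ω * Y b ω | m] =ᵐ[P] fun ω => q a ω * q b ω) (a b : κ) :
    ∫ ω, Y a ω * Y b ω ∂P = if a = b then ∫ ω, q a ω ∂P else ∫ ω, q a ω * q b ω ∂P := by
  split_ifs with h
  · subst h
    have hidem : (fun ω => Y a ω * Y a ω) = Y a := funext fun ω => by
      rcases hY01 a ω with h | h <;> simp [h]
    rw [hidem, ← integral_condExp hm, integral_congr_ae (hcond a)]
  · rw [← integral_condExp hm, integral_congr_ae (hcondprod a b h)]

lemma memLp_of_forall_eq_zero_or_one [IsFiniteMeasure P] {f : Ω → ℝ} (hf : Measurable f)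
    (h01 : ∀ ω, f ω = 0 ∨ f ω = 1) (p : ENNReal) : MemLp f p P :=
  memLp_of_bounded (a := 0) (b := 1)
    (.of_forall fun ω => by rcases h01 ω with h | h <;> simp [h]) hf.aestronglyMeasurable p

end SecondMoments

/-- The sample variance of the p̂ᵢ satisfies E[σ̂²] = σ² + (μ − μ² − σ²)/k. -/
theorem sample_variance_bias
    {Ω : Type*} [MeasurableSpace Ω] (P : Measure Ω) [IsProbabilityMeasure P]
    (n k : ℕ) (hn : 2 ≤ n) (hk : 0 < k)
    (p : Fin n → Ω → ℝ) (Y : Fin n → Fin k → Ω → ℝ) (μ σ2 : ℝ)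
    (hpmeas : ∀ i, Measurable (p i))
    (hprange : ∀ i ω, p i ω ∈ Set.Icc (0 : ℝ) 1)
    (hpiid : iIndepFun p P)
    (hpmean : ∀ i, ∫ ω, p i ω ∂P = μ)
    (hpvar : ∀ i, variance (p i) P = σ2)
    (hYmeas : ∀ i j, Measurable (Y i j))
    (hY01 : ∀ i j ω, Y i j ω = 0 ∨ Y i j ω = 1)
    (hcond : ∀ i j,
      P[Y i j | ⨆ i', MeasurableSpace.comap (p i') inferInstance] =ᵐ[P] p i)
    (hcondprod : ∀ i j i' j', (i, j) ≠ (i', j') →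
      P[fun ω => Y i j ω * Y i' j' ω |
          ⨆ i'', MeasurableSpace.comap (p i'') inferInstance]
        =ᵐ[P] fun ω => p i ω * p i' ω) :
    ∫ ω, ((n : ℝ) - 1)⁻¹ *
        ∑ i, (((k : ℝ)⁻¹ * ∑ j, Y i j ω)
          - (n : ℝ)⁻¹ * ∑ i', (k : ℝ)⁻¹ * ∑ j, Y i' j ω) ^ 2 ∂P
      = σ2 + (μ - μ ^ 2 - σ2) / k := by
  have hpL2 : ∀ i, MemLp (p i) 2 P := fun i =>
    memLp_of_bounded (.of_forall (hprange i)) (hpmeas i).aestronglyMeasurable 2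
  have hYint : ∀ i j i' j', Integrable (fun ω => Y i j ω * Y i' j' ω) P := fun i j i' j' =>
    (memLp_of_forall_eq_zero_or_one (hYmeas i j) (hY01 i j) 2).integrable_mul
      (memLp_of_forall_eq_zero_or_one (hYmeas i' j') (hY01 i' j') 2)
  have hYmom : ∀ i j i' j', ∫ ω, Y i j ω * Y i' j' ω ∂P
      = if i = i' then (if j = j' then μ else σ2 + μ ^ 2) else μ ^ 2 := by
    intro i j i' j'
    rw [integral_mul_of_condExp (iSup_le fun i => (hpmeas i).comap_le) (Y := fun a => Y a.1 a.2)
      (q := fun a => p a.1) (fun a => hY01 a.1 a.2) (fun a => hcond a.1 a.2)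
      (fun a b => hcondprod a.1 a.2 b.1 b.2) (i, j) (i', j'),
      integral_mul_of_iIndepFun hpL2 hpiid hpmean hpvar]
    by_cases hi : i = i' <;> by_cases hj : j = j' <;> simp [hi, hj, hpmean]
  have : Nonempty (Fin k) := ⟨⟨0, hk⟩⟩
  have hmeanMom : ∀ i i', ∫ ω, sampleMean (Y i · ω) * sampleMean (Y i' · ω) ∂P
      = if i = i' then (μ + (k - 1) * (σ2 + μ ^ 2)) / k else μ ^ 2 := by
    intro i i'
    split_ifs with h
    · subst h
      simpa using integral_sampleMean_mul_sampleMean (hYint i · i ·) (by simp [hYmom])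
    · exact integral_sampleMean_mul_sampleMean_of_const (hYint i · i' ·) (by simp [hYmom, h])
  trans ∫ ω, sampleVariance (fun i => sampleMean (Y i · ω)) ∂P
  · simp only [sampleVariance, sampleMean, Fintype.card_fin]
  rw [integral_sampleVariance_of_moments (by rw [Fintype.card_fin]; exact hn)
    (fun i i' => integrable_sampleMean_mul_sampleMean (hYint i · i' ·)) hmeanMom]
  field_simp
  ring
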